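/- Let Q be a compact set in ℝⁿ and let E₁, …, E_r be closed sets covering an open set N ⊆ ℝ^m. Suppose l : N → ℝ is a function and l₁, …, l_r : N → ℝ are C¹ functions such that l = lᵢ on Eᵢ for each i, and such that at every point p lying in Eᵢ ∩ E_j the differentials satisfy dlᵢ(p) = dl_j(p). Then l is C¹ on N, with dl(p) = dlᵢ(p) for p ∈ Eᵢ. -/

import Mathlib

/-!
Near a point `p ∈ N`, the pieces `E j` not containing `p` stay away from `p`, being relatively
closed in the open set `N`. Hence `𝓝 p` is the supremum of the filters `𝓝[E j] p` over the
finitely many pieces through `p`, and a limit along `𝓝 p` (a derivative, or continuity of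
`fderiv l`) can be checked on each such piece, where `l = li j` and `d(li j)(p)` is the common
value of the differentials.
-/

open Filter Set Topology

section Topology

variable {X : Type*} [TopologicalSpace X]

theorem nhdsWithin_eq_bot_of_isClosed_subtype {N s : Set X} {p : X} (hN : IsOpen N)
    (hs : IsClosed {x : N | ↑x ∈ s}) (hp : p ∈ N) (hps : p ∉ s) : 𝓝[s] p = ⊥ := by
  have hcompl : ∀ᶠ x in 𝓝 p, x ∉ s := by
    rw [← hN.nhdsWithin_eq hp, ← map_nhds_subtype_val ⟨p, hp⟩]
    exact hs.isOpen_compl.mem_nhds hps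
  exact inf_principal_eq_bot.2 hcompl

theorem nhds_eq_iSup_nhdsWithin_of_isClosed_subtype {ι : Type*} [Finite ι] {s : ι → Set X}
    {p : X} (hN : IsOpen (⋃ i, s i)) (hs : ∀ i, IsClosed {x : ⋃ i, s i | ↑x ∈ s i})
    (hp : p ∈ ⋃ i, s i) : 𝓝 p = ⨆ (i) (_ : p ∈ s i), 𝓝[s i] p := by
  rw [← hN.nhdsWithin_eq hp, nhdsWithin_iUnion]
  refine iSup_congr fun i ↦ ?_
  by_cases hpi : p ∈ s i
  · rw [iSup_pos hpi]
  · rw [iSup_neg hpi, nhdsWithin_eq_bot_of_isClosed_subtype hN (hs i) hp hpi]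

theorem continuousAt_of_nhds_eq_iSup {Y ι : Type*} [TopologicalSpace Y] {s : ι → Set X}
    {g : X → Y} {p : X} (hp : 𝓝 p = ⨆ (i) (_ : p ∈ s i), 𝓝[s i] p)
    (hg : ∀ i, p ∈ s i → ContinuousWithinAt g (s i) p) : ContinuousAt g p := by
  rw [ContinuousAt, hp]
  exact tendsto_iSup.2 fun i ↦ tendsto_iSup.2 (hg i)

end Topology

section Calculus

variable {𝕜 E F ι : Type*} [NontriviallyNormedField 𝕜] [NormedAddCommGroup E] [NormedSpace 𝕜 E]
  [NormedAddCommGroup F] [NormedSpace 𝕜 F] {s : ι → Set E} {f : E → F} {f' : E →L[𝕜] F} {p : E}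

theorem hasFDerivAt_of_nhds_eq_iSup (hp : 𝓝 p = ⨆ (i) (_ : p ∈ s i), 𝓝[s i] p)
    (hf : ∀ i, p ∈ s i → HasFDerivWithinAt f f' (s i) p) : HasFDerivAt f f' p := by
  rw [hasFDerivAt_iff_tendsto, hp]
  exact tendsto_iSup.2 fun i ↦ tendsto_iSup.2 fun hpi ↦ hasFDerivWithinAt_iff_tendsto.1 (hf i hpi)

variable [Finite ι] {g : ι → E → F}

theorem hasFDerivAt_of_eqOn_pieces (hN : IsOpen (⋃ i, s i))
    (hs : ∀ i, IsClosed {x : ⋃ i, s i | ↑x ∈ s i}) (hg : ∀ i, ContDiffOn 𝕜 1 (g i) (⋃ i, s i))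
    (hf : ∀ i, EqOn f (g i) (s i))
    (hd : ∀ i j, ∀ p ∈ s i ∩ s j, fderiv 𝕜 (g i) p = fderiv 𝕜 (g j) p) {i : ι} (hpi : p ∈ s i) :
    HasFDerivAt f (fderiv 𝕜 (g i) p) p := by
  have hpN : p ∈ ⋃ i, s i := mem_iUnion_of_mem i hpi
  refine hasFDerivAt_of_nhds_eq_iSup (nhds_eq_iSup_nhdsWithin_of_isClosed_subtype hN hs hpN)
    fun j hpj ↦ ?_
  have hgj : HasFDerivAt (g j) (fderiv 𝕜 (g j) p) p :=
    ((hg j).differentiableOn one_ne_zero p hpN |>.differentiableAt (hN.mem_nhds hpN)).hasFDerivAt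
  rw [hd i j p ⟨hpi, hpj⟩]
  exact hgj.hasFDerivWithinAt.congr (hf j) (hf j hpj)

theorem fderiv_eqOn_of_eqOn_pieces (hN : IsOpen (⋃ i, s i))
    (hs : ∀ i, IsClosed {x : ⋃ i, s i | ↑x ∈ s i}) (hg : ∀ i, ContDiffOn 𝕜 1 (g i) (⋃ i, s i))
    (hf : ∀ i, EqOn f (g i) (s i))
    (hd : ∀ i j, ∀ p ∈ s i ∩ s j, fderiv 𝕜 (g i) p = fderiv 𝕜 (g j) p) (i : ι) :
    EqOn (fderiv 𝕜 f) (fderiv 𝕜 (g i)) (s i) := fun _ hpi ↦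
  (hasFDerivAt_of_eqOn_pieces hN hs hg hf hd hpi).fderiv

theorem contDiffOn_one_of_eqOn_pieces (hN : IsOpen (⋃ i, s i))
    (hs : ∀ i, IsClosed {x : ⋃ i, s i | ↑x ∈ s i}) (hg : ∀ i, ContDiffOn 𝕜 1 (g i) (⋃ i, s i))
    (hf : ∀ i, EqOn f (g i) (s i))
    (hd : ∀ i j, ∀ p ∈ s i ∩ s j, fderiv 𝕜 (g i) p = fderiv 𝕜 (g j) p) :
    ContDiffOn 𝕜 1 f (⋃ i, s i) := by
  rw [← zero_add 1, contDiffOn_succ_iff_fderiv_of_isOpen hN, contDiffOn_zero]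
  refine ⟨fun p hp ↦ ?_, by simp, fun p hp ↦ ?_⟩
  · obtain ⟨i, hpi⟩ := mem_iUnion.1 hp
    exact (hasFDerivAt_of_eqOn_pieces hN hs hg hf hd hpi).differentiableAt.differentiableWithinAt
  · refine (continuousAt_of_nhds_eq_iSup (nhds_eq_iSup_nhdsWithin_of_isClosed_subtype hN hs hp)
      fun j hpj ↦ ?_).continuousWithinAt
    have hcont : ContinuousAt (fderiv 𝕜 (g j)) p :=
      ((hg j).continuousOn_fderiv_of_isOpen hN le_rfl).continuousAt (hN.mem_nhds hp)
    have hfd := fderiv_eqOn_of_eqOn_pieces hN hs hg hf hd j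
    exact hcont.continuousWithinAt.congr hfd (hfd hpj)

end Calculus

theorem stmt_18_general {m : ℕ} (r : ℕ) (N : Set (EuclideanSpace ℝ (Fin m)))
    (hN : IsOpen N)
    (E : Fin r → Set (EuclideanSpace ℝ (Fin m)))
    (hE_closed : ∀ i, IsClosed {x : N | (x : EuclideanSpace ℝ (Fin m)) ∈ E i})
    (hcover : N = ⋃ i, E i)
    (l : EuclideanSpace ℝ (Fin m) → ℝ)
    (li : Fin r → EuclideanSpace ℝ (Fin m) → ℝ)
    (hli : ∀ i, ContDiffOn ℝ 1 (li i) N)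
    (heq : ∀ i, Set.EqOn l (li i) (E i))
    (hd : ∀ i j, ∀ p ∈ E i ∩ E j, fderiv ℝ (li i) p = fderiv ℝ (li j) p) :
    ContDiffOn ℝ 1 l N ∧ ∀ i, ∀ p ∈ E i, fderiv ℝ l p = fderiv ℝ (li i) p := by
  subst hcover
  exact ⟨contDiffOn_one_of_eqOn_pieces hN hE_closed hli heq hd,
    fun i _ hpi ↦ fderiv_eqOn_of_eqOn_pieces hN hE_closed hli heq hd i hpi⟩

/-- Gluing lemma for C¹ functions: if an open set `N ⊆ ℝ^m` is the union of finitely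
many relatively closed sets `E i`, `l` agrees on each `E i` with a C¹ function `li i`,
and the differentials of the `li` agree on overlaps, then `l` is C¹ on `N` with
differential `d(li i)` on `E i`. -/
theorem stmt_18 {m : ℕ} (r : ℕ) (N : Set (EuclideanSpace ℝ (Fin m)))
    (hN : IsOpen N)
    (E : Fin r → Set (EuclideanSpace ℝ (Fin m)))
    (hE_sub : ∀ i, E i ⊆ N)
    (hE_closed : ∀ i, IsClosed {x : N | (x : EuclideanSpace ℝ (Fin m)) ∈ E i})
    (hcover : N = ⋃ i, E i)
    (l : EuclideanSpace ℝ (Fin m) → ℝ)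
    (li : Fin r → EuclideanSpace ℝ (Fin m) → ℝ)
    (hli : ∀ i, ContDiffOn ℝ 1 (li i) N)
    (heq : ∀ i, Set.EqOn l (li i) (E i))
    (hd : ∀ i j, ∀ p ∈ E i ∩ E j, fderiv ℝ (li i) p = fderiv ℝ (li j) p) :
    ContDiffOn ℝ 1 l N ∧ ∀ i, ∀ p ∈ E i, fderiv ℝ l p = fderiv ℝ (li i) p :=
  stmt_18_general r N hN E hE_closed hcover l li hli heq hd
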